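/- Suppose κ satisfies Assumption 1 and Hypothesis (H) holds. If a randomized policy f*_{k:N} and estimates x̂*_{k:N} are jointly optimal, i.e., C(f*_{k:N}, x̂*_{k:N}) ≤ C(f_{k:N}, x̂_{k:N}) for every randomized policy f_{k:N} and every x̂_{k:N} ∈ S^(N−k+1), then f*_{k:N} is non-degenerate: q*_j > 0 for every j ∈ {k, …, N}. -/

import Mathlib

/-!
Comparing with the threshold policy that is silent exactly on `D̄_j` shows that, for fixed
estimates `x̂`, the least cost is `G(x̂) = ∫ J*_k(·, x̂) dκ(x₀)`; so an optimal pair satisfies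
`C(f*, x̂*) = G(x̂*) ≤ G(z)` for every `z`. Under Assumption 1 every `J*_j` is `d`-continuous and
every `κ(x)` charges every nonempty open set, so a pointwise improvement of `J*_{j+1}` somewhere
improves `∫ J*_{j+1} dκ(x)` everywhere. Hence `Ḏ_j(x̂*) ≠ ∅`: otherwise `J*_j(·, x̂*) ≡ c'_j`, and
(H) plus backward propagation would produce `z` with `G(z) < G(x̂*)`.

Forward in `j`, `μ_{j|j−1}` charges every nonempty open set and `V_j = J*_j` holds
`μ_{j|j−1}`-a.e. At a point of the open set `Ḏ_j` this equality forces `f*_j = 1`, so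
`q*_j ≥ μ_{j|j−1}(Ḏ_j) > 0`; and wherever `f*_j > 0` it forces `V_{j+1} = J*_{j+1}` a.e. under
`κ(x)`, which carries the invariant over to `μ_{j+1|j}`.
-/

open MeasureTheory Filter
open scoped ENNReal NNReal Topology

noncomputable section

/-- The state space `S = ℝ² × [0, 2π)`. -/
abbrev S : Type := {x : ℝ × ℝ × ℝ // x.2.2 ∈ Set.Ico (0 : ℝ) (2 * Real.pi)}

/-- The metric `d` on `S`. -/
noncomputable def dS (x y : S) : ℝ :=
  Real.sqrt ((x.1.1 - y.1.1) ^ 2 + (x.1.2.1 - y.1.2.1) ^ 2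
    + 2 * (Real.cos x.1.2.2 - Real.cos y.1.2.2) ^ 2
    + 2 * (Real.sin x.1.2.2 - Real.sin y.1.2.2) ^ 2)

/-- The initial state `x₀ = (0,0,0)`. -/
def origin : S := ⟨(0, 0, 0), ⟨le_rfl, by positivity⟩⟩

/-- `κ` is a Markov kernel on `S`. -/
def IsMarkov (κ : S → Measure S) : Prop :=
  (∀ x, IsProbabilityMeasure (κ x)) ∧
    ∀ A : Set S, MeasurableSet A → Measurable fun x => κ x A

/-- Continuity of a real-valued function with respect to the metric `dS`. -/
def DContinuous (g : S → ℝ) : Prop :=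
  ∀ x : S, ∀ ε : ℝ, 0 < ε → ∃ δ : ℝ, 0 < δ ∧ ∀ y : S, dS x y < δ → |g y - g x| < ε

/-- Openness with respect to the metric `dS`. -/
def DOpen (O : Set S) : Prop :=
  ∀ x ∈ O, ∃ δ : ℝ, 0 < δ ∧ ∀ y : S, dS x y < δ → y ∈ O

/-- Assumption 1 on the kernel `κ`. -/
def Assumption1 (κ : S → Measure S) : Prop :=
  (∀ A : Set S, MeasurableSet A → DContinuous fun x => (κ x A).toReal) ∧
    ∀ O : Set S, DOpen O → O.Nonempty → ∀ x : S, 0 < κ x O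

/-- Auxiliary downward value recursion; the first argument is the number
`N + 1 - j` of remaining stages. -/
noncomputable def Jaux (κ : S → Measure S) (c' : ℕ → ℝ) (xhat : ℕ → S) :
    ℕ → ℕ → S → ℝ≥0∞
  | 0, _, _ => 0
  | m + 1, j, x =>
      min (ENNReal.ofReal (dS x (xhat j) ^ 2) + ∫⁻ y, Jaux κ c' xhat m (j + 1) y ∂(κ x))
        (ENNReal.ofReal (c' j))

/-- The optimal cost-to-go `J*_j(x, x̂_{j:N})`. -/
noncomputable def JJ (κ : S → Measure S) (c' : ℕ → ℝ) (N : ℕ) (xhat : ℕ → S)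
    (j : ℕ) (x : S) : ℝ≥0∞ :=
  Jaux κ c' xhat (N + 1 - j) j x

/-- `G_j(x, x̂_{j:N}) = ∫ J*_j(y, x̂_{j:N}) κ(x)(dy)`. -/
noncomputable def Gj (κ : S → Measure S) (c' : ℕ → ℝ) (N : ℕ) (xhat : ℕ → S)
    (j : ℕ) (x : S) : ℝ≥0∞ :=
  ∫⁻ y, JJ κ c' N xhat j y ∂(κ x)

/-- `G(x̂_{k:N}) = G_k(x₀, x̂_{k:N})`. -/
noncomputable def Gtot (κ : S → Measure S) (c' : ℕ → ℝ) (k N : ℕ) (xhat : ℕ → S) : ℝ≥0∞ :=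
  Gj κ c' N xhat k origin

/-- A randomized policy: a tuple of Borel measurable functions `f_j : S → [0,1]`. -/
def IsPolicy (k N : ℕ) (f : ℕ → S → ℝ≥0∞) : Prop :=
  ∀ j, k ≤ j → j ≤ N → Measurable (f j) ∧ ∀ x, f j x ≤ 1

/-- Auxiliary cost-to-go recursion for a policy; first argument is `N + 1 - j`. -/
noncomputable def Vaux (κ : S → Measure S) (c' : ℕ → ℝ) (xhat : ℕ → S)
    (f : ℕ → S → ℝ≥0∞) : ℕ → ℕ → S → ℝ≥0∞
  | 0, _, _ => 0
  | m + 1, j, x =>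
      f j x * (ENNReal.ofReal (dS x (xhat j) ^ 2) + ∫⁻ y, Vaux κ c' xhat f m (j + 1) y ∂(κ x))
        + (1 - f j x) * ENNReal.ofReal (c' j)

/-- The cost-to-go `V_j` of a policy `f` with estimates `x̂`. -/
noncomputable def VV (κ : S → Measure S) (c' : ℕ → ℝ) (N : ℕ) (xhat : ℕ → S)
    (f : ℕ → S → ℝ≥0∞) (j : ℕ) (x : S) : ℝ≥0∞ :=
  Vaux κ c' xhat f (N + 1 - j) j x

/-- The total expected cost `C(f_{k:N}, x̂_{k:N})`. -/
noncomputable def Cost (κ : S → Measure S) (c' : ℕ → ℝ) (k N : ℕ) (xhat : ℕ → S)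
    (f : ℕ → S → ℝ≥0∞) : ℝ≥0∞ :=
  ∫⁻ y, VV κ c' N xhat f k y ∂(κ origin)

/-- `f ∈ 𝔓(x̂_{k:N})`: `f` minimizes the cost over all randomized policies. -/
def inP (κ : S → Measure S) (c' : ℕ → ℝ) (k N : ℕ) (xhat : ℕ → S)
    (f : ℕ → S → ℝ≥0∞) : Prop :=
  IsPolicy k N f ∧
    ∀ g : ℕ → S → ℝ≥0∞, IsPolicy k N g → Cost κ c' k N xhat f ≤ Cost κ c' k N xhat g

/-- `x̂ ∈ 𝔛(f_{k:N})`: the estimates minimize the cost for the policy `f`. -/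
def inX (κ : S → Measure S) (c' : ℕ → ℝ) (k N : ℕ) (f : ℕ → S → ℝ≥0∞)
    (xhat : ℕ → S) : Prop :=
  ∀ yhat : ℕ → S, Cost κ c' k N xhat f ≤ Cost κ c' k N yhat f

/-- Conditioning a measure on "no transmission" at stage `j`. -/
noncomputable def condMeas (f : ℕ → S → ℝ≥0∞) (j : ℕ) (μ : Measure S) : Measure S :=
  (∫⁻ x, f j x ∂μ)⁻¹ • μ.withDensity (f j)

/-- The predicted measures `μ_{j|j−1}`, by recursion on `j - k`. -/
noncomputable def mupredAux (κ : S → Measure S) (f : ℕ → S → ℝ≥0∞) (k : ℕ) :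
    ℕ → Measure S
  | 0 => κ origin
  | n + 1 => (condMeas f (k + n) (mupredAux κ f k n)).bind κ

/-- `μ_{j|j−1}`. -/
noncomputable def mupred (κ : S → Measure S) (f : ℕ → S → ℝ≥0∞) (k j : ℕ) : Measure S :=
  mupredAux κ f k (j - k)

/-- `q_j = ∫ f_j dμ_{j|j−1}`. -/
noncomputable def qq (κ : S → Measure S) (f : ℕ → S → ℝ≥0∞) (k j : ℕ) : ℝ≥0∞ :=
  ∫⁻ x, f j x ∂(mupred κ f k j)

/-- `μ_{j|j}`. -/
noncomputable def mucond (κ : S → Measure S) (f : ℕ → S → ℝ≥0∞) (k j : ℕ) : Measure S :=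
  condMeas f j (mupred κ f k j)

/-- Non-degeneracy of a policy. -/
def NonDeg (κ : S → Measure S) (f : ℕ → S → ℝ≥0∞) (k N : ℕ) : Prop :=
  ∀ j, k ≤ j → j ≤ N → 0 < qq κ f k j

/-- The closed "no transmission" region `D̄_j`. -/
noncomputable def Dbar (κ : S → Measure S) (c' : ℕ → ℝ) (N : ℕ) (xhat : ℕ → S)
    (j : ℕ) : Set S :=
  {x : S | ENNReal.ofReal (dS x (xhat j) ^ 2) + ∫⁻ y, JJ κ c' N xhat (j + 1) y ∂(κ x)
      ≤ ENNReal.ofReal (c' j)}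

/-- The open "no transmission" region `Ḏ_j`. -/
noncomputable def Dund (κ : S → Measure S) (c' : ℕ → ℝ) (N : ℕ) (xhat : ℕ → S)
    (j : ℕ) : Set S :=
  {x : S | ENNReal.ofReal (dS x (xhat j) ^ 2) + ∫⁻ y, JJ κ c' N xhat (j + 1) y ∂(κ x)
      < ENNReal.ofReal (c' j)}

/-- Hypothesis (H). -/
def HypH (κ : S → Measure S) (c' : ℕ → ℝ) (k N : ℕ) : Prop :=
  ∀ j, k ≤ j → j ≤ N → ∃ xhat : ℕ → S, (Dund κ c' N xhat j).Nonempty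

/-- Weak convergence of measures on `(S, dS)`: tested against `dS`-continuous
bounded functions. -/
def WeakConvS (μl : ℕ → Measure S) (μ : Measure S) : Prop :=
  ∀ h : S → ℝ, DContinuous h → (∃ C : ℝ, ∀ x, |h x| ≤ C) →
    Tendsto (fun l => ∫ x, h x ∂(μl l)) atTop (𝓝 (∫ x, h x ∂μ))

/-- Convergence of a sequence of (non-degenerate) policies to a policy. -/
def PolConv (κ : S → Measure S) (k N : ℕ) (g : ℕ → ℕ → S → ℝ≥0∞)
    (f : ℕ → S → ℝ≥0∞) : Prop :=
  ∀ j, k ≤ j → j ≤ N →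
    WeakConvS (fun l => mucond κ (g l) k j) (mucond κ f k j) ∧
      Tendsto (fun l => qq κ (g l) k j) atTop (𝓝 (qq κ f k j))

open Set

noncomputable def eS (x : S) : EuclideanSpace ℝ (Fin 4) :=
  WithLp.toLp 2 ![x.1.1, x.1.2.1, Real.sqrt 2 * Real.cos x.1.2.2, Real.sqrt 2 * Real.sin x.1.2.2]

lemma dS_eq_dist (x y : S) : dS x y = dist (eS x) (eS y) := by
  simp only [EuclideanSpace.dist_eq, dS, eS, Fin.sum_univ_four, Real.dist_eq, sq_abs,
    Matrix.cons_val, ← mul_sub, mul_pow, Real.sq_sqrt zero_le_two, add_assoc]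

lemma dS_comm (x y : S) : dS x y = dS y x := by
  rw [dS_eq_dist, dS_eq_dist, dist_comm]

lemma continuous_eS : Continuous eS := by
  unfold eS
  fun_prop

/-- The topology of `dS`. It is coarser than the topology `S` inherits from `ℝ³`: it glues the
angle `0` to the angles near `2π`. -/
abbrev dTop : TopologicalSpace S := TopologicalSpace.induced eS inferInstance

lemma dContinuous_iff {g : S → ℝ} : DContinuous g ↔ Continuous[dTop, _] g := by
  refine Iff.trans ?_
    (@Metric.continuous_iff S ℝ (PseudoMetricSpace.induced eS inferInstance) _ g).symm
  refine forall_congr' fun x => forall₂_congr fun ε _ => exists_congr fun δ =>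
    and_congr_right fun _ => forall_congr' fun y => ?_
  rw [dS_comm, dS_eq_dist, Real.dist_eq]
  rfl

lemma dOpen_iff {O : Set S} : DOpen O ↔ IsOpen[dTop] O := by
  refine Iff.trans ?_ (@Metric.isOpen_iff S (PseudoMetricSpace.induced eS inferInstance) O).symm
  refine forall₂_congr fun x _ => exists_congr fun δ =>
    and_congr_right fun _ => forall_congr' fun y => ?_
  rw [dS_comm, dS_eq_dist]
  rfl

lemma le_dTop : (inferInstance : TopologicalSpace S) ≤ dTop :=
  continuous_iff_le_induced.1 continuous_eS

lemma measurableSet_of_isOpen_dTop {O : Set S} (hO : IsOpen[dTop] O) : MeasurableSet O :=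
  (le_dTop O hO).measurableSet

lemma measurable_of_continuous_dTop {β : Type*} [TopologicalSpace β] [MeasurableSpace β]
    [BorelSpace β] {g : S → β} (hg : Continuous[dTop, _] g) : Measurable g :=
  measurable_of_isOpen fun _ hU =>
    measurableSet_of_isOpen_dTop (by let := dTop; exact hU.preimage hg)

lemma continuous_ofReal_dS_sq (c : S) :
    Continuous[dTop, _] fun x => ENNReal.ofReal (dS x c ^ 2) := by
  let := dTop
  simp only [dS_eq_dist]
  exact ENNReal.continuous_ofReal.comp ((continuous_induced_dom.dist continuous_const).pow 2)

theorem continuous_integral_of_continuous_measureReal {X Y : Type*} [TopologicalSpace X]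
    [FirstCountableTopology X] [MeasurableSpace Y] {κ : X → Measure Y}
    [∀ x, IsProbabilityMeasure (κ x)]
    (hκ : ∀ A, MeasurableSet A → Continuous fun x => (κ x).real A)
    {g : Y → ℝ} (hg : Measurable g) (hg0 : 0 ≤ g) {C : ℝ} (hgC : ∀ y, g y ≤ C) :
    Continuous fun x => ∫ y, g y ∂κ x := by
  have hint : ∀ x, Integrable g (κ x) := fun x =>
    Integrable.of_bound hg.aestronglyMeasurable C
      (ae_of_all _ fun y => by rw [Real.norm_of_nonneg (hg0 y)]; exact hgC y)
  -- layer cake: `∫ g dκ(x) = ∫_{t > 0} κ(x){g > t} dt`, integrand dominated by `1_{t ≤ C}`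
  simp_rw [fun x => (hint x).integral_eq_integral_meas_lt (ae_of_all _ hg0)]
  refine continuous_of_dominated (bound := (Iic C).indicator 1) (fun x => ?_) (fun x => ?_) ?_
    (ae_of_all _ fun t => hκ _ (measurableSet_lt measurable_const hg))
  · refine (Antitone.measurable fun s t hst => ?_).aestronglyMeasurable
    exact measureReal_mono fun y (hy : t < g y) => hst.trans_lt hy
  · refine ae_of_all _ fun t => ?_
    rw [Real.norm_of_nonneg measureReal_nonneg]
    by_cases ht : t ≤ C
    · rw [indicator_of_mem (mem_Iic.2 ht), Pi.one_apply]
      exact measureReal_le_one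
    · have : {y | t < g y} = ∅ :=
        eq_empty_of_forall_notMem fun y hy => ht (hy.le.trans (hgC y))
      simp [this, indicator_of_notMem (show t ∉ Iic C from ht)]
  · rw [integrable_indicator_iff measurableSet_Iic]
    refine integrableOn_const ?_
    rw [Measure.restrict_apply measurableSet_Iic, Iic_inter_Ioi]
    simp

theorem continuous_lintegral_of_continuous_measureReal {X Y : Type*} [TopologicalSpace X]
    [FirstCountableTopology X] [MeasurableSpace Y] {κ : X → Measure Y}
    [∀ x, IsProbabilityMeasure (κ x)]
    (hκ : ∀ A, MeasurableSet A → Continuous fun x => (κ x).real A)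
    {g : Y → ℝ≥0∞} (hg : Measurable g) {C : ℝ≥0∞} (hC : C ≠ ∞) (hgC : ∀ y, g y ≤ C) :
    Continuous fun x => ∫⁻ y, g y ∂κ x := by
  have hfin : ∀ x, ∫⁻ y, g y ∂κ x ≠ ∞ := fun x =>
    ne_top_of_le_ne_top hC ((lintegral_mono hgC).trans_eq (by simp))
  have h : ∀ x, ∫⁻ y, g y ∂κ x = ENNReal.ofReal (∫ y, (g y).toReal ∂κ x) := fun x => by
    rw [integral_toReal hg.aemeasurable
      (ae_of_all _ fun y => (hgC y).trans_lt hC.lt_top), ENNReal.ofReal_toReal (hfin x)]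
  simp_rw [h]
  exact ENNReal.continuous_ofReal.comp (continuous_integral_of_continuous_measureReal hκ
    hg.ennreal_toReal (fun _ => ENNReal.toReal_nonneg) fun y => ENNReal.toReal_mono hC (hgC y))

namespace MeasureTheory

theorem Measure.ae_bind_of_ae_ae {X Y : Type*} [MeasurableSpace X] [MeasurableSpace Y]
    {ν : Measure X} {κ : X → Measure Y} (hκ : Measurable κ) {p : Y → Prop}
    (hp : MeasurableSet {y | p y}) (h : ∀ᵐ x ∂ν, ∀ᵐ y ∂κ x, p y) : ∀ᵐ y ∂ν.bind κ, p y := by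
  rw [ae_iff, ← compl_ofPred, Measure.bind_apply hp.compl hκ.aemeasurable]
  exact (lintegral_eq_zero_iff (Measure.measurable_coe hp.compl |>.comp hκ)).2
    (h.mono fun x hx => ae_iff.1 hx)

theorem Measure.bind_apply_pos {X Y : Type*} [MeasurableSpace X] [MeasurableSpace Y]
    {ν : Measure X} (hν : ν ≠ 0) {κ : X → Measure Y} (hκ : Measurable κ) {s : Set Y}
    (hs : MeasurableSet s) (h : ∀ x, 0 < κ x s) : 0 < ν.bind κ s := by
  rw [Measure.bind_apply hs hκ.aemeasurable]
  simpa using lintegral_strict_mono hν (Measure.measurable_coe hs |>.comp hκ).aemeasurable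
    (by simp) (ae_of_all _ h)

end MeasureTheory

theorem Nat.decreasing_induction_of_lt {N : ℕ} {P : ℕ → Prop} (h_gt : ∀ j, N < j → P j)
    (h_le : ∀ j ≤ N, P (j + 1) → P j) (j : ℕ) : P j := by
  rcases lt_or_ge N j with h | h
  · exact h_gt j h
  · exact Nat.decreasingInduction (motive := fun j _ => P j)
      (fun i hi => h_le i (Nat.lt_succ_iff.1 hi)) (h_gt _ N.lt_succ_self) (Nat.le_succ_of_le h)

namespace ENNReal

variable {f a b c : ℝ≥0∞}

theorem min_le_mix (hf : f ≤ 1) (hab : a ≤ b) : min a c ≤ f * b + (1 - f) * c :=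
  calc min a c = f * min a c + (1 - f) * min a c := by
        rw [← add_mul, add_tsub_cancel_of_le hf, one_mul]
    _ ≤ f * b + (1 - f) * c := by gcongr; exacts [(min_le_left _ _).trans hab, min_le_right _ _]

theorem mul_eq_mul_min_of_mix_eq_min (hf : f ≤ 1) (hab : a ≤ b) (hc : c ≠ ∞)
    (h : f * b + (1 - f) * c = min a c) :
    f * b = f * min a c ∧ (1 - f) * c = (1 - f) * min a c := by
  have hm : min a c ≠ ∞ := ne_top_of_le_ne_top hc (min_le_right _ _)
  have hsum : f * b + (1 - f) * c = f * min a c + (1 - f) * min a c := by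
    rw [h, ← add_mul, add_tsub_cancel_of_le hf, one_mul]
  have hb : f * b ≠ ∞ := ne_top_of_le_ne_top hm (h ▸ le_self_add)
  have hc' : (1 - f) * c ≠ ∞ := ne_top_of_le_ne_top hm (h ▸ le_add_self)
  have h₁ : f * min a c ≤ f * b := by gcongr; exact (min_le_left _ _).trans hab
  have h₂ : (1 - f) * min a c ≤ (1 - f) * c := by gcongr; exact min_le_right _ _
  refine ⟨le_antisymm (ENNReal.le_of_add_le_add_right hc' ?_) h₁,
    le_antisymm (ENNReal.le_of_add_le_add_left hb ?_) h₂⟩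
  · rw [hsum]; gcongr
  · rw [hsum]; gcongr

theorem eq_one_of_mix_eq_min (hf : f ≤ 1) (hab : a ≤ b) (hc : c ≠ ∞)
    (h : f * b + (1 - f) * c = min a c) (hac : a < c) : f = 1 := by
  have h₂ := (mul_eq_mul_min_of_mix_eq_min hf hab hc h).2
  rw [min_eq_left hac.le] at h₂
  refine le_antisymm hf (tsub_eq_zero_iff_le.1 (by_contra fun h0 => hac.ne' ?_))
  exact (ENNReal.mul_right_inj h0 (ne_top_of_le_ne_top one_ne_top tsub_le_self)).1 h₂

theorem eq_of_mix_eq_min_of_ne_zero (hf : f ≤ 1) (hab : a ≤ b) (hc : c ≠ ∞)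
    (h : f * b + (1 - f) * c = min a c) (hf0 : f ≠ 0) : b = a := by
  have h₁ := (mul_eq_mul_min_of_mix_eq_min hf hab hc h).1
  rw [ENNReal.mul_right_inj hf0 (ne_top_of_le_ne_top one_ne_top hf)] at h₁
  exact le_antisymm (h₁.trans_le (min_le_left _ _)) hab

end ENNReal

lemma IsMarkov.measurable {κ : S → Measure S} (hκ : IsMarkov κ) : Measurable κ :=
  Measure.measurable_of_measurable_coe κ hκ.2

lemma IsMarkov.measurable_lintegral {κ : S → Measure S} (hκ : IsMarkov κ) {g : S → ℝ≥0∞}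
    (hg : Measurable g) : Measurable fun x => ∫⁻ y, g y ∂κ x :=
  (Measure.measurable_lintegral hg).comp hκ.measurable

lemma Assumption1.measure_pos {κ : S → Measure S} (hA : Assumption1 κ) {O : Set S}
    (hO : IsOpen[dTop] O) (hne : O.Nonempty) (x : S) : 0 < κ x O :=
  hA.2 O (dOpen_iff.2 hO) hne x

lemma Assumption1.continuous_lintegral {κ : S → Measure S} (hA : Assumption1 κ)
    (hκ : IsMarkov κ) {g : S → ℝ≥0∞} (hg : Measurable g) {C : ℝ≥0∞} (hC : C ≠ ∞)
    (hgC : ∀ y, g y ≤ C) : Continuous[dTop, _] fun x => ∫⁻ y, g y ∂κ x := by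
  let := dTop
  have := TopologicalSpace.firstCountableTopology_induced S _ eS
  have := hκ.1
  exact continuous_lintegral_of_continuous_measureReal
    (fun A hA' => dContinuous_iff.1 (hA.1 A hA')) hg hC hgC

section Bellman

variable {κ : S → Measure S} {c' : ℕ → ℝ} {N : ℕ} {xhat : ℕ → S} {f : ℕ → S → ℝ≥0∞}
  {j : ℕ}

/-- The expected cost-to-go of not transmitting at stage `j`. -/
noncomputable def silentCost (κ : S → Measure S) (c' : ℕ → ℝ) (N : ℕ) (xhat : ℕ → S) (j : ℕ)
    (x : S) : ℝ≥0∞ :=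
  ENNReal.ofReal (dS x (xhat j) ^ 2) + ∫⁻ y, JJ κ c' N xhat (j + 1) y ∂κ x

lemma JJ_eq_zero_of_lt (h : N < j) : JJ κ c' N xhat j = 0 := by
  funext x
  simp [JJ, Nat.sub_eq_zero_of_le h, Jaux]

lemma JJ_apply_of_le (h : j ≤ N) (x : S) :
    JJ κ c' N xhat j x = min (silentCost κ c' N xhat j x) (ENNReal.ofReal (c' j)) := by
  unfold silentCost JJ
  rw [show N + 1 - j = N - j + 1 by omega, show N + 1 - (j + 1) = N - j by omega]
  rfl

lemma VV_eq_zero_of_lt (h : N < j) : VV κ c' N xhat f j = 0 := by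
  funext x
  simp [VV, Nat.sub_eq_zero_of_le h, Vaux]

lemma VV_apply_of_le (h : j ≤ N) (x : S) :
    VV κ c' N xhat f j x = f j x * (ENNReal.ofReal (dS x (xhat j) ^ 2)
      + ∫⁻ y, VV κ c' N xhat f (j + 1) y ∂κ x) + (1 - f j x) * ENNReal.ofReal (c' j) := by
  unfold VV
  rw [show N + 1 - j = N - j + 1 by omega, show N + 1 - (j + 1) = N - j by omega]
  rfl

lemma JJ_le (x : S) : JJ κ c' N xhat j x ≤ ENNReal.ofReal (c' j) := by
  rcases le_or_gt j N with h | h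
  · rw [JJ_apply_of_le h]
    exact min_le_right _ _
  · simp [JJ_eq_zero_of_lt h]

lemma lintegral_JJ_ne_top (hκ : IsMarkov κ) (x : S) : ∫⁻ y, JJ κ c' N xhat j y ∂κ x ≠ ∞ := by
  have := hκ.1 x
  refine ne_top_of_le_ne_top (ENNReal.ofReal_ne_top (r := c' j)) ?_
  calc ∫⁻ y, JJ κ c' N xhat j y ∂κ x ≤ ∫⁻ _, ENNReal.ofReal (c' j) ∂κ x := lintegral_mono JJ_le
    _ = ENNReal.ofReal (c' j) := by rw [lintegral_const, measure_univ, mul_one]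

lemma continuous_silentCost_of_continuous (hκ : IsMarkov κ) (hA : Assumption1 κ)
    (h : Continuous[dTop, _] (JJ κ c' N xhat (j + 1))) :
    Continuous[dTop, _] (silentCost κ c' N xhat j) := by
  let := dTop
  exact (continuous_ofReal_dS_sq _).add (hA.continuous_lintegral hκ
    (measurable_of_continuous_dTop h) ENNReal.ofReal_ne_top JJ_le)

lemma continuous_JJ (hκ : IsMarkov κ) (hA : Assumption1 κ) (j : ℕ) :
    Continuous[dTop, _] (JJ κ c' N xhat j) := by
  let := dTop
  induction j using Nat.decreasing_induction_of_lt (N := N) with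
  | h_gt j h => rw [JJ_eq_zero_of_lt h]; exact continuous_const
  | h_le j h ih =>
    rw [show JJ κ c' N xhat j = _ from funext (JJ_apply_of_le h)]
    exact (continuous_silentCost_of_continuous hκ hA ih).min continuous_const

lemma continuous_silentCost (hκ : IsMarkov κ) (hA : Assumption1 κ) :
    Continuous[dTop, _] (silentCost κ c' N xhat j) :=
  continuous_silentCost_of_continuous hκ hA (continuous_JJ hκ hA _)

lemma measurable_JJ (hκ : IsMarkov κ) (hA : Assumption1 κ) :
    Measurable (JJ κ c' N xhat j) :=
  measurable_of_continuous_dTop (continuous_JJ hκ hA j)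

lemma isOpen_Dund (hκ : IsMarkov κ) (hA : Assumption1 κ) : IsOpen[dTop] (Dund κ c' N xhat j) := by
  let := dTop
  exact isOpen_lt (continuous_silentCost hκ hA) continuous_const

lemma measurableSet_Dbar (hκ : IsMarkov κ) (hA : Assumption1 κ) :
    MeasurableSet (Dbar κ c' N xhat j) :=
  measurableSet_le (measurable_of_continuous_dTop (continuous_silentCost hκ hA)) measurable_const

lemma IsPolicy.of_le {k : ℕ} (hf : IsPolicy k N f) (hkj : k ≤ j) : IsPolicy j N f :=
  fun i hji hiN => hf i (hkj.trans hji) hiN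

lemma measurable_VV (hκ : IsMarkov κ) (j : ℕ) (hf : IsPolicy j N f) :
    Measurable (VV κ c' N xhat f j) := by
  induction j using Nat.decreasing_induction_of_lt (N := N) with
  | h_gt j h => rw [VV_eq_zero_of_lt h]; exact measurable_const
  | h_le j h ih =>
    have hfj := (hf j le_rfl h).1
    rw [show VV κ c' N xhat f j = _ from funext (VV_apply_of_le h)]
    have hd := measurable_of_continuous_dTop (continuous_ofReal_dS_sq (xhat j))
    exact (hfj.mul (hd.add (hκ.measurable_lintegral (ih (hf.of_le j.le_succ))))).add
      ((measurable_const.sub hfj).mul measurable_const)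

lemma JJ_le_VV (j : ℕ) (hf : IsPolicy j N f) : JJ κ c' N xhat j ≤ VV κ c' N xhat f j := by
  induction j using Nat.decreasing_induction_of_lt (N := N) with
  | h_gt j h => rw [JJ_eq_zero_of_lt h, VV_eq_zero_of_lt h]
  | h_le j h ih =>
    intro x
    rw [JJ_apply_of_le h, VV_apply_of_le h]
    refine ENNReal.min_le_mix ((hf j le_rfl h).2 x) ?_
    unfold silentCost
    gcongr with y
    exact ih (hf.of_le j.le_succ) y

lemma silentCost_le_add_lintegral_VV (hf : IsPolicy (j + 1) N f) (x : S) :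
    silentCost κ c' N xhat j x
      ≤ ENNReal.ofReal (dS x (xhat j) ^ 2) + ∫⁻ y, VV κ c' N xhat f (j + 1) y ∂κ x := by
  unfold silentCost
  gcongr with y
  exact JJ_le_VV (j + 1) hf y

end Bellman

section ThresholdPolicy

variable {κ : S → Measure S} {c' : ℕ → ℝ} {k N : ℕ} {xhat : ℕ → S}

noncomputable def thresholdPolicy (κ : S → Measure S) (c' : ℕ → ℝ) (N : ℕ) (xhat : ℕ → S) :
    ℕ → S → ℝ≥0∞ :=
  fun j => (Dbar κ c' N xhat j).indicator 1

lemma isPolicy_thresholdPolicy (hκ : IsMarkov κ) (hA : Assumption1 κ) :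
    IsPolicy k N (thresholdPolicy κ c' N xhat) :=
  fun _ _ _ => ⟨measurable_one.indicator (measurableSet_Dbar hκ hA),
    indicator_le fun _ _ => le_rfl⟩

lemma VV_thresholdPolicy (j : ℕ) :
    VV κ c' N xhat (thresholdPolicy κ c' N xhat) j = JJ κ c' N xhat j := by
  induction j using Nat.decreasing_induction_of_lt (N := N) with
  | h_gt j h => rw [JJ_eq_zero_of_lt h, VV_eq_zero_of_lt h]
  | h_le j h ih =>
    funext x
    rw [JJ_apply_of_le h, VV_apply_of_le h, ih]
    by_cases hx : x ∈ Dbar κ c' N xhat j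
    · have hx' : silentCost κ c' N xhat j x ≤ ENNReal.ofReal (c' j) := hx
      rw [min_eq_left hx']
      simp only [thresholdPolicy, indicator_of_mem hx, Pi.one_apply, one_mul, tsub_self,
        zero_mul, add_zero, silentCost]
    · have hx' : ¬silentCost κ c' N xhat j x ≤ ENNReal.ofReal (c' j) := hx
      simp [thresholdPolicy, indicator_of_notMem hx, min_eq_right (le_of_not_ge hx')]

lemma Cost_thresholdPolicy :
    Cost κ c' k N xhat (thresholdPolicy κ c' N xhat) = Gtot κ c' k N xhat := by
  simp only [Cost, Gtot, Gj, VV_thresholdPolicy]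

lemma Gtot_le_Cost {f : ℕ → S → ℝ≥0∞} (hf : IsPolicy k N f) :
    Gtot κ c' k N xhat ≤ Cost κ c' k N xhat f :=
  lintegral_mono (JJ_le_VV k hf)

end ThresholdPolicy

section Improvement

variable {κ : S → Measure S} {c' : ℕ → ℝ} {N j : ℕ}

lemma lintegral_JJ_lt_of_lt (hκ : IsMarkov κ) (hA : Assumption1 κ) {z w : ℕ → S}
    (h : JJ κ c' N z j < JJ κ c' N w j) (x : S) :
    ∫⁻ y, JJ κ c' N z j y ∂κ x < ∫⁻ y, JJ κ c' N w j y ∂κ x := by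
  obtain ⟨hle, x₀, hx₀⟩ := Pi.lt_def.1 h
  have hO : IsOpen[dTop] {y | JJ κ c' N z j y < JJ κ c' N w j y} := by
    let := dTop
    exact isOpen_lt (continuous_JJ hκ hA j) (continuous_JJ hκ hA j)
  exact lintegral_strict_mono_of_ae_le_of_ae_lt_on (measurable_JJ hκ hA).aemeasurable
    (lintegral_JJ_ne_top hκ x) (ae_of_all _ hle) (hA.measure_pos hO ⟨x₀, hx₀⟩ x).ne'
    (ae_of_all _ fun _ hy => hy)

lemma JJ_lt_const_of_Dund_nonempty {w : ℕ → S} (hj : j ≤ N) (h : (Dund κ c' N w j).Nonempty) :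
    JJ κ c' N w j < fun _ => ENNReal.ofReal (c' j) := by
  obtain ⟨x, hx⟩ := h
  refine Pi.lt_def.2 ⟨fun _ => JJ_le _, x, ?_⟩
  rw [JJ_apply_of_le hj, min_eq_left hx.le]
  exact hx

lemma JJ_eq_const_of_Dund_eq_empty {y : ℕ → S} (hj : j ≤ N) (h : Dund κ c' N y j = ∅) :
    JJ κ c' N y j = fun _ => ENNReal.ofReal (c' j) := by
  funext x
  rw [JJ_apply_of_le hj, min_eq_right (not_lt.1 fun hx => (h ▸ hx : x ∈ (∅ : Set S)))]

lemma JJ_congr {z w : ℕ → S} (j : ℕ) (h : ∀ i, j ≤ i → z i = w i) :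
    JJ κ c' N z j = JJ κ c' N w j := by
  induction j using Nat.decreasing_induction_of_lt (N := N) with
  | h_gt j hj => rw [JJ_eq_zero_of_lt hj, JJ_eq_zero_of_lt hj]
  | h_le j hj ih =>
    funext x
    rw [JJ_apply_of_le hj, JJ_apply_of_le hj, silentCost, silentCost, h j le_rfl,
      ih fun i hi => h i (by omega)]

lemma exists_JJ_lt_of_Dund_eq_empty (hj : j ≤ N) {y : ℕ → S}
    (hH : ∃ w, (Dund κ c' N w j).Nonempty) (h : Dund κ c' N y j = ∅) :
    ∃ z, JJ κ c' N z j < JJ κ c' N y j := by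
  obtain ⟨w, hw⟩ := hH
  exact ⟨w, (JJ_eq_const_of_Dund_eq_empty hj h).symm ▸ JJ_lt_const_of_Dund_nonempty hj hw⟩

/-- If `Ḏ_j(y) = ∅` then `J*_j(·, y) ≡ c'_j` and (H) improves on it; otherwise estimating by
`y j` at stage `j` and by the better `z` afterwards lowers the silent cost everywhere. -/
lemma exists_JJ_lt_of_succ (hκ : IsMarkov κ) (hA : Assumption1 κ) (hj : j ≤ N) {y : ℕ → S}
    (hH : ∃ w, (Dund κ c' N w j).Nonempty) (h : ∃ z, JJ κ c' N z (j + 1) < JJ κ c' N y (j + 1)) :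
    ∃ z, JJ κ c' N z j < JJ κ c' N y j := by
  rcases (Dund κ c' N y j).eq_empty_or_nonempty with hy | ⟨x₀, hx₀⟩
  · exact exists_JJ_lt_of_Dund_eq_empty hj hH hy
  obtain ⟨z, hz⟩ := h
  set z' := Function.update z j (y j)
  have hz' : JJ κ c' N z' (j + 1) = JJ κ c' N z (j + 1) :=
    JJ_congr _ fun i hi => Function.update_of_ne (by omega) _ _
  have hlt : ∀ x, silentCost κ c' N z' j x < silentCost κ c' N y j x := fun x => by
    simp only [silentCost, z', Function.update_self]
    rw [hz']
    exact ENNReal.add_lt_add_left ENNReal.ofReal_ne_top (lintegral_JJ_lt_of_lt hκ hA hz x)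
  refine ⟨z', Pi.lt_def.2 ⟨fun x => ?_, x₀, ?_⟩⟩
  · rw [JJ_apply_of_le hj, JJ_apply_of_le hj]
    exact min_le_min (hlt x).le le_rfl
  · rw [JJ_apply_of_le hj, JJ_apply_of_le hj, min_eq_left ((hlt x₀).trans hx₀).le,
      min_eq_left hx₀.le]
    exact hlt x₀

/-- If `Ḏ_j(y)` were empty, (H) and backward propagation would give `z` with
`J*_k(·, z) < J*_k(·, y)`, hence `G(z) < G(y)` by full support of `κ(x₀)`. -/
lemma Dund_nonempty_of_forall_Gtot_le (hκ : IsMarkov κ) (hA : Assumption1 κ) {k : ℕ}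
    (hH : HypH κ c' k N) {y : ℕ → S} (hy : ∀ z, Gtot κ c' k N y ≤ Gtot κ c' k N z)
    (hkj : k ≤ j) (hjN : j ≤ N) : (Dund κ c' N y j).Nonempty := by
  by_contra hempty
  have hj : ∃ z, JJ κ c' N z j < JJ κ c' N y j := exists_JJ_lt_of_Dund_eq_empty hjN
    (hH j hkj hjN) (not_nonempty_iff_eq_empty.1 hempty)
  obtain ⟨z, hz⟩ : ∃ z, JJ κ c' N z k < JJ κ c' N y k :=
    Nat.decreasingInduction' (fun i hij hki ih =>
      exists_JJ_lt_of_succ hκ hA (by omega) (hH i hki (by omega)) ih) hkj hj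
  exact (hy z).not_gt (lintegral_JJ_lt_of_lt hκ hA hz origin)

end Improvement

section Forward

variable {κ : S → Measure S} {c' : ℕ → ℝ} {k N j : ℕ} {xstar : ℕ → S} {f : ℕ → S → ℝ≥0∞}

lemma mupred_self : mupred κ f k k = κ origin := by
  simp [mupred, mupredAux]

lemma mupred_succ (hkj : k ≤ j) : mupred κ f k (j + 1) = (mucond κ f k j).bind κ := by
  unfold mucond mupred
  rw [show j + 1 - k = j - k + 1 by omega, mupredAux, show k + (j - k) = j by omega]

lemma isProbabilityMeasure_condMeas {μ : Measure S} [IsProbabilityMeasure μ]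
    (hf : ∀ x, f j x ≤ 1) (hq : ∫⁻ x, f j x ∂μ ≠ 0) : IsProbabilityMeasure (condMeas f j μ) := by
  have hq' : ∫⁻ x, f j x ∂μ ≠ ∞ :=
    ne_top_of_le_ne_top ENNReal.one_ne_top ((lintegral_mono hf).trans_eq (by simp))
  constructor
  rw [condMeas, Measure.smul_apply, withDensity_apply _ MeasurableSet.univ, Measure.restrict_univ,
    smul_eq_mul, ENNReal.inv_mul_cancel hq hq']

lemma ae_condMeas {μ : Measure S} (hf : Measurable (f j)) {p : S → Prop}
    (h : ∀ᵐ x ∂μ, f j x ≠ 0 → p x) : ∀ᵐ x ∂condMeas f j μ, p x :=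
  Measure.ae_smul_measure ((ae_withDensity_iff hf).2 h) _

lemma eq_one_of_VV_eq_JJ (hjN : j ≤ N) (hf : IsPolicy j N f) {x : S}
    (hx : VV κ c' N xstar f j x = JJ κ c' N xstar j x) (hD : x ∈ Dund κ c' N xstar j) :
    f j x = 1 := by
  rw [VV_apply_of_le hjN, JJ_apply_of_le hjN] at hx
  exact ENNReal.eq_one_of_mix_eq_min ((hf j le_rfl hjN).2 x)
    (silentCost_le_add_lintegral_VV (hf.of_le j.le_succ) x) ENNReal.ofReal_ne_top hx hD

lemma ae_VV_succ_eq_of_VV_eq_JJ (hκ : IsMarkov κ) (hjN : j ≤ N) (hf : IsPolicy j N f) {x : S}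
    (hx : VV κ c' N xstar f j x = JJ κ c' N xstar j x) (hfx : f j x ≠ 0) :
    VV κ c' N xstar f (j + 1) =ᵐ[κ x] JJ κ c' N xstar (j + 1) := by
  rw [VV_apply_of_le hjN, JJ_apply_of_le hjN] at hx
  have h := ENNReal.eq_of_mix_eq_min_of_ne_zero ((hf j le_rfl hjN).2 x)
    (silentCost_le_add_lintegral_VV (hf.of_le j.le_succ) x) ENNReal.ofReal_ne_top hx hfx
  have hint := (ENNReal.add_right_inj ENNReal.ofReal_ne_top).1 h
  exact (ae_eq_of_ae_le_of_lintegral_le (ae_of_all _ (JJ_le_VV _ (hf.of_le j.le_succ)))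
    (lintegral_JJ_ne_top hκ x) (measurable_VV hκ _ (hf.of_le j.le_succ)).aemeasurable
    hint.le).symm

structure ForwardInvariant (κ : S → Measure S) (c' : ℕ → ℝ) (N : ℕ) (xstar : ℕ → S)
    (f : ℕ → S → ℝ≥0∞) (k j : ℕ) : Prop where
  isProbabilityMeasure : IsProbabilityMeasure (mupred κ f k j)
  measure_pos : ∀ O : Set S, IsOpen[dTop] O → O.Nonempty → 0 < mupred κ f k j O
  ae_VV_eq_JJ : VV κ c' N xstar f j =ᵐ[mupred κ f k j] JJ κ c' N xstar j

lemma forwardInvariant_start (hκ : IsMarkov κ) (hA : Assumption1 κ) (hf : IsPolicy k N f)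
    (hcost : Cost κ c' k N xstar f ≤ Gtot κ c' k N xstar) :
    ForwardInvariant κ c' N xstar f k k := by
  refine ⟨?_, ?_, ?_⟩ <;> rw [mupred_self]
  · exact hκ.1 origin
  · exact fun O hO hne => hA.measure_pos hO hne origin
  · exact (ae_eq_of_ae_le_of_lintegral_le (ae_of_all _ (JJ_le_VV k hf))
      (lintegral_JJ_ne_top hκ origin) (measurable_VV hκ k hf).aemeasurable hcost).symm

/-- On the open set `Ḏ_j` an optimal policy never transmits, and `μ_{j|j−1}` charges it. -/
lemma ForwardInvariant.qq_pos (hI : ForwardInvariant κ c' N xstar f k j) (hκ : IsMarkov κ)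
    (hA : Assumption1 κ) (hf : IsPolicy j N f) (hjN : j ≤ N)
    (hD : (Dund κ c' N xstar j).Nonempty) : 0 < qq κ f k j := by
  have hO : IsOpen[dTop] (Dund κ c' N xstar j) := isOpen_Dund hκ hA
  have hsilent : ∀ᵐ x ∂mupred κ f k j, x ∈ Dund κ c' N xstar j → 1 = f j x :=
    hI.ae_VV_eq_JJ.mono fun x hx hxD => (eq_one_of_VV_eq_JJ hjN hf hx hxD).symm
  calc 0 < mupred κ f k j (Dund κ c' N xstar j) := hI.measure_pos _ hO hD
    _ = ∫⁻ x in Dund κ c' N xstar j, f j x ∂mupred κ f k j := by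
      rw [← setLIntegral_one, setLIntegral_congr_fun_ae (measurableSet_of_isOpen_dTop hO) hsilent]
    _ ≤ qq κ f k j := setLIntegral_le_lintegral _ _

lemma ForwardInvariant.succ (hI : ForwardInvariant κ c' N xstar f k j) (hκ : IsMarkov κ)
    (hA : Assumption1 κ) (hf : IsPolicy j N f) (hkj : k ≤ j) (hjN : j ≤ N)
    (hq : 0 < qq κ f k j) : ForwardInvariant κ c' N xstar f k (j + 1) := by
  have := hI.isProbabilityMeasure
  have hν : IsProbabilityMeasure (mucond κ f k j) :=
    isProbabilityMeasure_condMeas (hf j le_rfl hjN).2 hq.ne'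
  refine ⟨?_, ?_, ?_⟩ <;> rw [mupred_succ hkj]
  · exact isProbabilityMeasure_bind hκ.measurable.aemeasurable (ae_of_all _ hκ.1)
  · exact fun O hO hne => Measure.bind_apply_pos (IsProbabilityMeasure.ne_zero _) hκ.measurable
      (measurableSet_of_isOpen_dTop hO) fun x => hA.measure_pos hO hne x
  · refine Measure.ae_bind_of_ae_ae hκ.measurable
      (measurableSet_eq_fun (measurable_VV hκ _ (hf.of_le j.le_succ)) (measurable_JJ hκ hA)) ?_
    exact ae_condMeas (hf j le_rfl hjN).1 (hI.ae_VV_eq_JJ.mono fun x hx hfx =>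
      ae_VV_succ_eq_of_VV_eq_JJ hκ hjN hf hx hfx)

end Forward

theorem jointly_optimal_nondegenerate_general (κ : S → Measure S) (hκ : IsMarkov κ)
    (hA : Assumption1 κ)
    (k N : ℕ) (c' : ℕ → ℝ)
    (hH : HypH κ c' k N)
    (fstar : ℕ → S → ℝ≥0∞) (xstar : ℕ → S) (hfstar : IsPolicy k N fstar)
    (hopt : ∀ (f : ℕ → S → ℝ≥0∞) (xhat : ℕ → S), IsPolicy k N f →
      Cost κ c' k N xstar fstar ≤ Cost κ c' k N xhat f) :
    NonDeg κ fstar k N := by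
  have hcost : ∀ z, Cost κ c' k N xstar fstar ≤ Gtot κ c' k N z := fun z =>
    (hopt _ z (isPolicy_thresholdPolicy hκ hA)).trans_eq Cost_thresholdPolicy
  have hD : ∀ j, k ≤ j → j ≤ N → (Dund κ c' N xstar j).Nonempty := fun j hkj hjN =>
    Dund_nonempty_of_forall_Gtot_le hκ hA hH (fun z => (Gtot_le_Cost hfstar).trans (hcost z))
      hkj hjN
  have hI : ∀ j, k ≤ j → j ≤ N → ForwardInvariant κ c' N xstar fstar k j := by
    intro j hkj
    induction j, hkj using Nat.le_induction with
    | base => exact fun _ => forwardInvariant_start hκ hA hfstar (hcost xstar)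
    | succ j hkj ih =>
      intro hjN
      have hIj := ih (by omega)
      exact hIj.succ hκ hA (hfstar.of_le hkj) hkj (by omega)
        (hIj.qq_pos hκ hA (hfstar.of_le hkj) (by omega) (hD j hkj (by omega)))
  exact fun j hkj hjN => (hI j hkj hjN).qq_pos hκ hA (hfstar.of_le hkj) hjN (hD j hkj hjN)

/-- Under Assumption 1 and Hypothesis (H), any jointly optimal policy is
non-degenerate. -/
theorem jointly_optimal_nondegenerate (κ : S → Measure S) (hκ : IsMarkov κ)
    (hA : Assumption1 κ)
    (k N : ℕ) (hkN : k ≤ N) (c' : ℕ → ℝ) (hc' : ∀ j, k ≤ j → j ≤ N → 0 < c' j)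
    (hH : HypH κ c' k N)
    (fstar : ℕ → S → ℝ≥0∞) (xstar : ℕ → S) (hfstar : IsPolicy k N fstar)
    (hopt : ∀ (f : ℕ → S → ℝ≥0∞) (xhat : ℕ → S), IsPolicy k N f →
      Cost κ c' k N xstar fstar ≤ Cost κ c' k N xhat f) :
    NonDeg κ fstar k N :=
  jointly_optimal_nondegenerate_general κ hκ hA k N c' hH fstar xstar hfstar hopt

end
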